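/- arXiv:2409.01730 — 2 statements merged into one kernel-verified Lean document; each statement's English description precedes it below -/
import Mathlib

section
/- Let (Ω, F, P) be a probability space, d ≥ 1 a natural number, θ* ∈ ℝ^d, and let g, Δ : ℝ^d → ℝ^d be functions satisfying the nondegeneracy condition g(θ*) + Δ(θ*) = 0. Fix α ∈ (0,1) and δ ∈ (0,α). Suppose that for every θ ∈ ℝ^d there are set-valued random elements T_{α−δ}(θ) : Ω → Set(ℝ^d) and R_δ(θ) : Ω → Set(ℝ^d) such that the events {ω : g(θ) ∈ T_{α−δ}(θ)(ω)}, {ω : Δ(θ) ∈ R_δ(θ)(ω)}, and {ω : 0 ∈ R_δ(θ)(ω) + T_{α−δ}(θ)(ω)} are measurable, and such that P(g(θ) ∈ T_{α−δ}(θ)) ≥ 1 − (α − δ) and P(Δ(θ) ∈ R_δ(θ)) ≥ 1 − δ. Define the random confidence set C^PP_α(ω) = {θ ∈ ℝ^d : 0 ∈ R_δ(θ)(ω) + T_{α−δ}(θ)(ω)}, where + denotes the Minkowski sum of subsets of ℝ^d. Then P(θ* ∈ C^PP_α) ≥ 1 − α. -/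
open MeasureTheory ProbabilityTheory
open scoped Pointwise

/-! The coverage event of `C^PP_α` at `θ*` contains the intersection of the two coverage events at
`θ*`: there `0 = Δ θ* + g θ* ∈ R θ* ω + T θ* ω` by nondegeneracy. A union bound on the
two failure events, of probabilities at most `α - δ` and `δ`, gives the claim. -/

namespace MeasureTheory

variable {Ω : Type*} [MeasurableSpace Ω] {μ : Measure Ω} [IsProbabilityMeasure μ] {s t : Set Ω}

theorem measureReal_add_measureReal_le_measureReal_inter_add_one (ht : NullMeasurableSet t μ) :
    μ.real s + μ.real t ≤ μ.real (s ∩ t) + 1 := by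
  rw [← measureReal_union_add_inter₀ ht, add_comm]
  exact add_le_add_right measureReal_le_one _

theorem ofReal_one_sub_add_le_measure_inter (ht : NullMeasurableSet t μ) {a b : ℝ}
    (hs : ENNReal.ofReal (1 - a) ≤ μ s) (hb : ENNReal.ofReal (1 - b) ≤ μ t) :
    ENNReal.ofReal (1 - (a + b)) ≤ μ (s ∩ t) := by
  rw [ENNReal.ofReal_le_iff_le_toReal (measure_ne_top μ _)] at hs hb ⊢
  have := measureReal_add_measureReal_le_measureReal_inter_add_one (s := s) ht
  simp only [measureReal_def] at this
  linarith

end MeasureTheory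

theorem fedppi_convex_estimation_general
    {Ω : Type*} [MeasurableSpace Ω] (P : Measure Ω) [IsProbabilityMeasure P]
    (d : ℕ)
    (θstar : Fin d → ℝ) (g Δ : (Fin d → ℝ) → (Fin d → ℝ))
    (h_nondeg : g θstar + Δ θstar = 0)
    (α δ : ℝ)
    (T R : (Fin d → ℝ) → Ω → Set (Fin d → ℝ))
    (hR_meas : ∀ θ, MeasurableSet {ω | Δ θ ∈ R θ ω})
    (hT_cov : ∀ θ, ENNReal.ofReal (1 - (α - δ)) ≤ P {ω | g θ ∈ T θ ω})
    (hR_cov : ∀ θ, ENNReal.ofReal (1 - δ) ≤ P {ω | Δ θ ∈ R θ ω}) :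
    ENNReal.ofReal (1 - α)
      ≤ P {ω | θstar ∈ {θ : Fin d → ℝ | (0 : Fin d → ℝ) ∈ R θ ω + T θ ω}} := by
  have h_cover : {ω | g θstar ∈ T θstar ω} ∩ {ω | Δ θstar ∈ R θstar ω}
      ⊆ {ω | θstar ∈ {θ : Fin d → ℝ | (0 : Fin d → ℝ) ∈ R θ ω + T θ ω}} := by
    rintro ω ⟨hg, hΔ⟩
    have h_zero : Δ θstar + g θstar = 0 := by rwa [add_comm]
    exact h_zero ▸ Set.add_mem_add hΔ hg
  calc ENNReal.ofReal (1 - α) = ENNReal.ofReal (1 - ((α - δ) + δ)) := by rw [sub_add_cancel]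
    _ ≤ P ({ω | g θstar ∈ T θstar ω} ∩ {ω | Δ θstar ∈ R θstar ω}) :=
      ofReal_one_sub_add_le_measure_inter (hR_meas θstar).nullMeasurableSet
        (hT_cov θstar) (hR_cov θstar)
    _ ≤ _ := measure_mono h_cover

/-- **Theorem 1 (Convex estimation).** If, for every `θ`, the random set
`T (α - δ)` covers `g θ` with probability at least `1 - (α - δ)` and the random set
`R δ` covers the rectifier `Δ θ` with probability at least `1 - δ`, and the
nondegeneracy condition `g θ* + Δ θ* = 0` holds, then the prediction-powered
confidence set `C^PP_α ω = {θ | 0 ∈ R θ ω + T θ ω}` (Minkowski sum) covers `θ*`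
with probability at least `1 - α`. -/
theorem fedppi_convex_estimation
    {Ω : Type*} [MeasurableSpace Ω] (P : Measure Ω) [IsProbabilityMeasure P]
    (d : ℕ) (hd : 1 ≤ d)
    (θstar : Fin d → ℝ) (g Δ : (Fin d → ℝ) → (Fin d → ℝ))
    (h_nondeg : g θstar + Δ θstar = 0)
    (α δ : ℝ) (hα : α ∈ Set.Ioo (0 : ℝ) 1) (hδ : δ ∈ Set.Ioo (0 : ℝ) α)
    (T R : (Fin d → ℝ) → Ω → Set (Fin d → ℝ))
    (hT_meas : ∀ θ, MeasurableSet {ω | g θ ∈ T θ ω})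
    (hR_meas : ∀ θ, MeasurableSet {ω | Δ θ ∈ R θ ω})
    (hC_meas : ∀ θ, MeasurableSet {ω | (0 : Fin d → ℝ) ∈ R θ ω + T θ ω})
    (hT_cov : ∀ θ, ENNReal.ofReal (1 - (α - δ)) ≤ P {ω | g θ ∈ T θ ω})
    (hR_cov : ∀ θ, ENNReal.ofReal (1 - δ) ≤ P {ω | Δ θ ∈ R θ ω}) :
    ENNReal.ofReal (1 - α)
      ≤ P {ω | θstar ∈ {θ : Fin d → ℝ | (0 : Fin d → ℝ) ∈ R θ ω + T θ ω}} :=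
  fedppi_convex_estimation_general P d θstar g Δ h_nondeg α δ T R hR_meas hT_cov hR_cov
end

section
/- Let (Ω, F, P) be a probability space, Θ an arbitrary set of admissible parameters, and θ* ∈ Θ. Fix α ∈ (0,1) and δ ∈ (0,α). Let L, L^f : Θ → ℝ be deterministic functions with Δ(θ) := L(θ) − L^f(θ), assume L(θ*) ≤ L(θ) for all θ ∈ Θ, and let L̃^f : Θ → Ω → ℝ be a random function and θ̃^f : Ω → Θ a random element. Suppose there are random bounds R^u_{δ/2}, R^l_{δ/2}, T^u_{(α−δ)/2}, T^l_{(α−δ)/2} : Θ → Ω → ℝ (all relevant events measurable) such that: P( Δ(θ*) ≥ R^l_{δ/2}(θ*) ) ≥ 1 − δ/2; P( Δ(θ̃^f) ≤ R^u_{δ/2}(θ̃^f) ) ≥ 1 − δ/2; P( L̃^f(θ*) − L^f(θ*) ≤ T^u_{(α−δ)/2}(θ*) ) ≥ 1 − (α−δ)/2; and P( L̃^f(θ̃^f) − L^f(θ̃^f) ≥ T^l_{(α−δ)/2}(θ̃^f) ) ≥ 1 − (α−δ)/2. Define the random confidence set C^PP_α(ω) = { θ ∈ Θ : L̃^f(θ)(ω)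 ≤ L̃^f(θ̃^f(ω))(ω) + ( R^u_{δ/2}(θ̃^f(ω))(ω) − R^l_{δ/2}(θ)(ω) ) + ( T^u_{(α−δ)/2}(θ)(ω) − T^l_{(α−δ)/2}(θ̃^f(ω))(ω) ) }. Then P(θ* ∈ C^PP_α) ≥ 1 − α. -/
/-!
On the intersection of the four coverage events, `θstar` lies in the confidence set: chaining
the two rectifier bounds and the two fluctuation bounds with `L θstar ≤ L (θtf ω)` is exactly the
defining inequality of the set. A union bound over the four failure probabilities
`δ/2 + δ/2 + (α-δ)/2 + (α-δ)/2 = α` then gives coverage `1 - α`.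
-/

open MeasureTheory

namespace MeasureTheory

variable {Ω : Type*} [MeasurableSpace Ω] {P : Measure Ω} [IsProbabilityMeasure P] {s t : Set Ω}

lemma one_sub_add_le_probReal_inter {a b : ℝ} (hs : MeasurableSet s)
    (hPs : 1 - a ≤ P.real s) (hPt : 1 - b ≤ P.real t) : 1 - (a + b) ≤ P.real (s ∩ t) := by
  have hdiff : P.real t - P.real sᶜ ≤ P.real (t \ sᶜ) := le_measureReal_sdiff
  rw [probReal_compl_eq_one_sub hs, Set.sdiff_compl, Set.inter_comm] at hdiff
  linarith

lemma ofReal_one_sub_add_le_prob_inter {a b : ℝ} (hs : MeasurableSet s)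
    (hPs : ENNReal.ofReal (1 - a) ≤ P s) (hPt : ENNReal.ofReal (1 - b) ≤ P t) :
    ENNReal.ofReal (1 - (a + b)) ≤ P (s ∩ t) := by
  rw [ENNReal.ofReal_le_iff_le_toReal (measure_ne_top P _)] at hPs hPt ⊢
  exact one_sub_add_le_probReal_inter hs hPs hPt

end MeasureTheory

theorem fedppi_general_risk_minimization_general
    {Ω : Type*} [MeasurableSpace Ω] (P : Measure Ω) [IsProbabilityMeasure P]
    {Θ : Type*} (θstar : Θ)
    (α δ : ℝ)
    (L Lf : Θ → ℝ) (h_min : ∀ θ : Θ, L θstar ≤ L θ)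
    (Ltf : Θ → Ω → ℝ) (θtf : Ω → Θ)
    (Ru Rl Tu Tl : Θ → Ω → ℝ)
    (hRl_meas : MeasurableSet {ω | Rl θstar ω ≤ L θstar - Lf θstar})
    (hRu_meas : MeasurableSet {ω | L (θtf ω) - Lf (θtf ω) ≤ Ru (θtf ω) ω})
    (hTu_meas : MeasurableSet {ω | Ltf θstar ω - Lf θstar ≤ Tu θstar ω})
    (hRl_cov : ENNReal.ofReal (1 - δ / 2)
        ≤ P {ω | Rl θstar ω ≤ L θstar - Lf θstar})
    (hRu_cov : ENNReal.ofReal (1 - δ / 2)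
        ≤ P {ω | L (θtf ω) - Lf (θtf ω) ≤ Ru (θtf ω) ω})
    (hTu_cov : ENNReal.ofReal (1 - (α - δ) / 2)
        ≤ P {ω | Ltf θstar ω - Lf θstar ≤ Tu θstar ω})
    (hTl_cov : ENNReal.ofReal (1 - (α - δ) / 2)
        ≤ P {ω | Tl (θtf ω) ω ≤ Ltf (θtf ω) ω - Lf (θtf ω)}) :
    ENNReal.ofReal (1 - α)
      ≤ P {ω | θstar ∈ {θ : Θ | Ltf θ ω ≤ Ltf (θtf ω) ω
            + (Ru (θtf ω) ω - Rl θ ω) + (Tu θ ω - Tl (θtf ω) ω)}} := by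
  have hevents := ofReal_one_sub_add_le_prob_inter ((hRl_meas.inter hRu_meas).inter hTu_meas)
    (ofReal_one_sub_add_le_prob_inter (hRl_meas.inter hRu_meas)
      (ofReal_one_sub_add_le_prob_inter hRl_meas hRl_cov hRu_cov) hTu_cov) hTl_cov
  have hsplit : δ / 2 + δ / 2 + (α - δ) / 2 + (α - δ) / 2 = α := by ring
  rw [hsplit] at hevents
  refine hevents.trans (measure_mono ?_)
  rintro ω ⟨⟨⟨hRl, hRu⟩, hTu⟩, hTl⟩
  simp only [Set.mem_ofPred_eq] at hRl hRu hTu hTl ⊢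
  linarith [h_min (θtf ω)]

/-- **Theorem 3 (General risk minimization: finite population).**
`L` is the true risk with minimizer `θ* ∈ Θ`, `Lf` the risk computed with
predictions, `Δ θ = L θ - Lf θ` the rectifier, `Ltf` a random empirical
predicted risk and `θtf` a random empirical minimizer. Given lower/upper
confidence bounds for the rectifier at `θ*` and `θtf` (each at level
`1 - δ/2`) and for the empirical fluctuation `Ltf - Lf` at `θ*` and `θtf`
(each at level `1 - (α-δ)/2`), the prediction-powered confidence set
`C^PP_α = {θ | Ltf θ ≤ Ltf θtf + (Ru θtf - Rl θ) + (Tu θ - Tl θtf)}`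
covers `θ*` with probability at least `1 - α`. -/
theorem fedppi_general_risk_minimization
    {Ω : Type*} [MeasurableSpace Ω] (P : Measure Ω) [IsProbabilityMeasure P]
    {Θ : Type*} (θstar : Θ)
    (α δ : ℝ) (hα : α ∈ Set.Ioo (0 : ℝ) 1) (hδ : δ ∈ Set.Ioo (0 : ℝ) α)
    (L Lf : Θ → ℝ) (h_min : ∀ θ : Θ, L θstar ≤ L θ)
    (Ltf : Θ → Ω → ℝ) (θtf : Ω → Θ)
    (Ru Rl Tu Tl : Θ → Ω → ℝ)
    (hRl_meas : MeasurableSet {ω | Rl θstar ω ≤ L θstar - Lf θstar})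
    (hRu_meas : MeasurableSet {ω | L (θtf ω) - Lf (θtf ω) ≤ Ru (θtf ω) ω})
    (hTu_meas : MeasurableSet {ω | Ltf θstar ω - Lf θstar ≤ Tu θstar ω})
    (hTl_meas : MeasurableSet {ω | Tl (θtf ω) ω ≤ Ltf (θtf ω) ω - Lf (θtf ω)})
    (hC_meas : MeasurableSet {ω | Ltf θstar ω ≤ Ltf (θtf ω) ω
        + (Ru (θtf ω) ω - Rl θstar ω) + (Tu θstar ω - Tl (θtf ω) ω)})
    (hRl_cov : ENNReal.ofReal (1 - δ / 2)
        ≤ P {ω | Rl θstar ω ≤ L θstar - Lf θstar})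
    (hRu_cov : ENNReal.ofReal (1 - δ / 2)
        ≤ P {ω | L (θtf ω) - Lf (θtf ω) ≤ Ru (θtf ω) ω})
    (hTu_cov : ENNReal.ofReal (1 - (α - δ) / 2)
        ≤ P {ω | Ltf θstar ω - Lf θstar ≤ Tu θstar ω})
    (hTl_cov : ENNReal.ofReal (1 - (α - δ) / 2)
        ≤ P {ω | Tl (θtf ω) ω ≤ Ltf (θtf ω) ω - Lf (θtf ω)}) :
    ENNReal.ofReal (1 - α)
      ≤ P {ω | θstar ∈ {θ : Θ | Ltf θ ω ≤ Ltf (θtf ω) ω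
            + (Ru (θtf ω) ω - Rl θ ω) + (Tu θ ω - Tl (θtf ω) ω)}} :=
  fedppi_general_risk_minimization_general P θstar α δ L Lf h_min Ltf θtf Ru Rl Tu Tl hRl_meas
    hRu_meas hTu_meas hRl_cov hRu_cov hTu_cov hTl_cov
end
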